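/- arXiv:0902.2418 — 2 statements merged into one kernel-verified Lean document; each statement's English description precedes it below -/
import Mathlib

section
/- Let Φ : M × ℝ → M be a continuous flow on a Hausdorff topological space M (i.e. Φ is continuous, Φ(x,0) = x, and Φ(Φ(x,s),t) = Φ(x,s+t)), and let μ : M → ℝ be a continuous function such that Φ(x, μ(x)) = x for every x ∈ M. Then: (i) for every x ∈ M the function t ↦ μ(Φ(x,t)) is locally constant on ℝ; (ii) if x is non-periodic, i.e. the map t ↦ Φ(x,t) is injective, then μ(x) = 0; (iii) if x is periodic with minimal period T > 0 (the map t ↦ Φ(x,t) is non-constant, Φ(x,T) = x, and no s with 0 < s < T satisfies Φ(x,s) = x), then μ(x) = n·T for some integer n. -/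
/-!
The periods of a point `x`, `{t | Φ (x, t) = x}`, form an additive subgroup of `ℝ`, and since
`μ (Φ (x, t))` is a period of `Φ (x, t)` it is a period of `x`. So `t ↦ μ (Φ (x, t))` is a
continuous map into a subgroup of `ℝ`; if it is not constant its image contains an interval, the
subgroup is then open, hence all of `ℝ`, so `x` is a fixed point and the map is constant after
all.
If `T` is the least positive period, the subgroup of periods is `ℤ T`, and `μ x` lies in it.
-/

open Set Topology

theorem AddSubgroup.eq_top_of_mem_nhds {G : Type*} [TopologicalSpace G] [AddGroup G]
    [SeparatelyContinuousAdd G] [ConnectedSpace G] (H : AddSubgroup G) {g : G}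
    (hg : (H : Set G) ∈ 𝓝 g) : H = ⊤ := by
  have hopen := H.isOpen_of_mem_nhds hg
  have hclopen : IsClopen (H : Set G) := ⟨H.isClosed_of_isOpen hopen, hopen⟩
  exact SetLike.coe_injective <| (hclopen.eq_univ ⟨0, H.zero_mem⟩).trans coe_top.symm

theorem AddSubgroup.eq_top_of_isPreconnected_subset {H : AddSubgroup ℝ} {s : Set ℝ}
    (hs : IsPreconnected s) (hsH : s ⊆ H) (hnt : s.Nontrivial) : H = ⊤ := by
  obtain ⟨u, hu, v, hv, huv⟩ := hnt.exists_lt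
  refine H.eq_top_of_mem_nhds (g := (u + v) / 2) (Filter.mem_of_superset ?_ <|
    (hs.ordConnected.out hu hv).trans hsH)
  exact Icc_mem_nhds (by linarith) (by linarith)

namespace Flow

variable {τ α : Type*} [TopologicalSpace τ] [TopologicalSpace α]

section AddGroup

variable [AddGroup τ] (ϕ : Flow τ α)

def periods (x : α) : AddSubgroup τ where
  carrier := {t | ϕ t x = x}
  zero_mem' := ϕ.map_zero_apply x
  add_mem' {s t} (hs : ϕ s x = x) (ht : ϕ t x = x) := by
    show ϕ (s + t) x = x
    rw [map_add, ht, hs]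
  neg_mem' {t} (ht : ϕ t x = x) := by
    show ϕ (-t) x = x
    conv_lhs => rw [← ht, ← map_add, neg_add_cancel, map_zero_apply]

@[simp]
theorem mem_periods {x : α} {t : τ} : t ∈ ϕ.periods x ↔ ϕ t x = x := Iff.rfl

theorem periods_eq_top_iff {x : α} : ϕ.periods x = ⊤ ↔ ∀ t, ϕ t x = x := by
  simp [AddSubgroup.eq_top_iff']

end AddGroup

section AddCommGroup

variable [AddCommGroup τ] (ϕ : Flow τ α)

theorem periods_apply (t : τ) (x : α) : ϕ.periods (ϕ t x) = ϕ.periods x := by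
  ext s
  rw [mem_periods, mem_periods, ← map_add, add_comm, map_add]
  exact (ϕ.toHomeomorph t).injective.eq_iff

theorem periods_eq_zmultiples [LinearOrder τ] [IsOrderedAddMonoid τ] [Archimedean τ]
    {x : α} {T : τ} (hT : IsLeast {t | t ∈ ϕ.periods x ∧ 0 < t} T) :
    ϕ.periods x = AddSubgroup.zmultiples T := by
  rw [AddSubgroup.zmultiples_eq_closure]
  exact AddSubgroup.cyclic_of_min hT

end AddCommGroup

theorem apply_eq_of_forall_apply_self_eq {ϕ : Flow ℝ α} {μ : α → ℝ} (hμ : Continuous μ)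
    (hfix : ∀ y, ϕ (μ y) y = y) (x : α) (t : ℝ) : μ (ϕ t x) = μ x := by
  have hrange : range (fun t => μ (ϕ t x)) ⊆ ϕ.periods x := by
    rintro _ ⟨t, rfl⟩
    rw [← periods_apply ϕ t]
    exact hfix _
  by_cases hsub : (range fun t => μ (ϕ t x)).Subsingleton
  · simpa only [map_zero_apply] using hsub (mem_range_self t) (mem_range_self 0)
  · have hcont : Continuous fun t => μ (ϕ t x) :=
      hμ.comp (ϕ.continuous continuous_id continuous_const)
    have := AddSubgroup.eq_top_of_isPreconnected_subset (isPreconnected_range hcont) hrange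
      (not_subsingleton_iff.1 hsub)
    rw [(ϕ.periods_eq_top_iff).1 this t]

end Flow

theorem stmt1_general {M : Type*} [TopologicalSpace M]
    (Φ : M × ℝ → M) (hΦc : Continuous Φ)
    (hΦ0 : ∀ x, Φ (x, 0) = x)
    (hΦadd : ∀ x s t, Φ (Φ (x, s), t) = Φ (x, s + t))
    (μ : M → ℝ) (hμ : Continuous μ)
    (hfix : ∀ x, Φ (x, μ x) = x) :
    (∀ x : M, IsLocallyConstant fun t : ℝ => μ (Φ (x, t)))
    ∧ (∀ x : M, Function.Injective (fun t : ℝ => Φ (x, t)) → μ x = 0)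
    ∧ (∀ x : M, ∀ T : ℝ, 0 < T → (¬ ∀ t : ℝ, Φ (x, t) = x) → Φ (x, T) = x →
        (∀ s : ℝ, 0 < s → s < T → Φ (x, s) ≠ x) → ∃ n : ℤ, μ x = n * T) := by
  let ϕ : Flow ℝ M :=
    { toFun := fun t x => Φ (x, t)
      cont' := hΦc.comp continuous_swap
      map_add' := fun t₁ t₂ x => by rw [hΦadd, add_comm]
      map_zero' := hΦ0 }
  refine ⟨fun x => ?_, fun x hinj => hinj ((hfix x).trans (hΦ0 x).symm), ?_⟩
  · exact .of_constant _ fun s t =>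
      (ϕ.apply_eq_of_forall_apply_self_eq hμ hfix x s).trans
        (ϕ.apply_eq_of_forall_apply_self_eq hμ hfix x t).symm
  · intro x T hT _ hTx hmin
    have hleast : IsLeast {t | t ∈ ϕ.periods x ∧ 0 < t} T :=
      ⟨⟨hTx, hT⟩, fun s ⟨hs, hs0⟩ => not_lt.1 fun hsT => hmin s hs0 hsT hs⟩
    have hμx : μ x ∈ ϕ.periods x := hfix x
    rw [ϕ.periods_eq_zmultiples hleast] at hμx
    obtain ⟨n, hn⟩ := AddSubgroup.mem_zmultiples_iff.1 hμx
    exact ⟨n, by rw [← hn, zsmul_eq_mul]⟩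

/-- For a continuous flow `Φ` on a Hausdorff space `M` and a continuous
`μ : M → ℝ` with `Φ (x, μ x) = x` for all `x`:
(i) `t ↦ μ (Φ (x, t))` is locally constant for every `x`;
(ii) if `t ↦ Φ (x, t)` is injective then `μ x = 0`;
(iii) if `x` is periodic with minimal period `T > 0`, then `μ x = n·T` for some `n : ℤ`. -/
theorem stmt1 {M : Type*} [TopologicalSpace M] [T2Space M]
    (Φ : M × ℝ → M) (hΦc : Continuous Φ)
    (hΦ0 : ∀ x, Φ (x, 0) = x)
    (hΦadd : ∀ x s t, Φ (Φ (x, s), t) = Φ (x, s + t))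
    (μ : M → ℝ) (hμ : Continuous μ)
    (hfix : ∀ x, Φ (x, μ x) = x) :
    (∀ x : M, IsLocallyConstant fun t : ℝ => μ (Φ (x, t)))
    ∧ (∀ x : M, Function.Injective (fun t : ℝ => Φ (x, t)) → μ x = 0)
    ∧ (∀ x : M, ∀ T : ℝ, 0 < T → (¬ ∀ t : ℝ, Φ (x, t) = x) → Φ (x, T) = x →
        (∀ s : ℝ, 0 < s → s < T → Φ (x, s) ≠ x) → ∃ n : ℤ, μ x = n * T) :=
  stmt1_general Φ hΦc hΦ0 hΦadd μ hμ hfix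
end

section
/- Let Φ : M × ℝ → M be a continuous flow on a topological space M, and let z ∈ M be a fixed point of Φ, i.e. Φ(z,t) = z for all t ∈ ℝ. Let D ⊆ M, let θ : D → (0,∞) be a function with Φ(x, θ(x)) = x for every x ∈ D, and define h : D → M by h(x) = Φ(x, θ(x)/2). If there exist a neighbourhood W of z and a sequence (x_i) in D with x_i → z and h(x_i) ∉ W for all i, then the sequence (θ(x_i)) is unbounded. -/
/-- For a continuous flow `Φ` on a topological space `M`, a fixed point `z`,
a set `D` with a function `θ : D → (0,∞)` satisfying `Φ (x, θ x) = x`, and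
`h x = Φ (x, θ x / 2)`: if some sequence `x i ∈ D` converges to `z` while `h (x i)`
stays outside a fixed neighbourhood `W` of `z`, then `(θ (x i))` is unbounded. -/
theorem stmt18 {M : Type*} [TopologicalSpace M]
    (Φ : M × ℝ → M) (hΦc : Continuous Φ)
    (hΦ0 : ∀ x, Φ (x, 0) = x)
    (hΦadd : ∀ x s t, Φ (Φ (x, s), t) = Φ (x, s + t))
    (z : M) (hz : ∀ t : ℝ, Φ (z, t) = z)
    (D : Set M) (θ : M → ℝ)
    (hθpos : ∀ x ∈ D, 0 < θ x) (hθfix : ∀ x ∈ D, Φ (x, θ x) = x)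
    (h : M → M) (hh : ∀ x ∈ D, h x = Φ (x, θ x / 2))
    (W : Set M) (hW : W ∈ nhds z)
    (x : ℕ → M) (hxD : ∀ i, x i ∈ D)
    (hxlim : Filter.Tendsto x Filter.atTop (nhds z))
    (hout : ∀ i, h (x i) ∉ W) :
    ∀ C : ℝ, ∃ i, C < θ (x i) := by
  intro C
  by_contra hcon
  push_neg at hcon
  have hzint : z ∈ interior W := mem_interior_iff_mem_nhds.2 hW
  have hV : IsOpen (Φ ⁻¹' interior W) := isOpen_interior.preimage hΦc
  have hsub : ({z} : Set M) ×ˢ Set.Icc (0:ℝ) C ⊆ Φ ⁻¹' interior W := by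
    rintro ⟨a, t⟩ ⟨ha, ht⟩
    simp only [Set.mem_singleton_iff] at ha
    subst ha
    simpa [hz t] using hzint
  obtain ⟨u, v, hu, hv, hzu, hIv, huv⟩ :=
    generalized_tube_lemma isCompact_singleton isCompact_Icc hV hsub
  have hu_nhds : u ∈ nhds z := hu.mem_nhds (hzu rfl)
  obtain ⟨i, hi⟩ := (hxlim.eventually (eventually_mem_nhds_iff.mpr hu_nhds)).exists
  have hθi := hθpos (x i) (hxD i)
  have hmem : (x i, θ (x i) / 2) ∈ u ×ˢ v := by
    refine ⟨mem_of_mem_nhds hi, hIv ⟨by linarith, by linarith [hcon i]⟩⟩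
  have : Φ (x i, θ (x i) / 2) ∈ interior W := huv hmem
  exact hout i (by rw [hh (x i) (hxD i)]; exact interior_subset this)
end
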